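/- Chernoff–Hoeffding bound in KL form (upper tail): if X₁,…,Xₙ are i.i.d. Bernoulli(μ) random variables and μ̂ = (1/n)·Σᵢ Xᵢ, then for any ε ∈ [0, 1-μ], P(μ̂ ≥ μ + ε) ≤ exp(−n·KL(μ+ε‖μ)). -/

import Mathlib

/-!
Markov's inequality applied to `exp (t * S)`, with `S` the sum of the samples, together with
independence gives `P(S ≥ n p) ≤ (e^{-t p} (1 - μ + μ e^t))^n` for `p = μ + ε` and every `t ≥ 0`.
For `0 < μ < p < 1` the exponential tilt `e^t = p (1 - μ) / ((1 - p) μ)` turns the base into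
exactly `exp (-KL(p‖μ))`; for `p = 1` the base tends to `μ = exp (-KL(1‖μ))` as `t → ∞`. In the
remaining cases `KL(p‖μ) ≤ 0`, and `t = 0` already suffices.
-/

open MeasureTheory ProbabilityTheory

noncomputable def klBer (p q : ℝ) : ℝ :=
  p * Real.log (p / q) + (1 - p) * Real.log ((1 - p) / (1 - q))

open Real Filter Topology

noncomputable def bernoulliChernoffBound (μ p t : ℝ) : ℝ :=
  exp (-t * p) * (1 - μ + μ * exp t)

lemma klBer_self (p : ℝ) : klBer p p = 0 := by
  simp [klBer]

-- Here `log (p / 0) = log 0 = 0`, so only the second summand of `klBer` remains.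
lemma klBer_zero_right_nonpos {p : ℝ} (hp₀ : 0 ≤ p) (hp₁ : p ≤ 1) : klBer p 0 ≤ 0 := by
  simpa [klBer] using
    mul_nonpos_of_nonneg_of_nonpos (by linarith) (log_nonpos (by linarith) (by linarith))

lemma klBer_one_left (μ : ℝ) : klBer 1 μ = -log μ := by
  simp [klBer]

lemma bernoulliChernoffBound_log_eq {μ p : ℝ} (hμ : 0 < μ) (hμp : μ < p) (hp : p < 1) :
    bernoulliChernoffBound μ p (log (p * (1 - μ) / ((1 - p) * μ))) = exp (-klBer p μ) := by
  have hp₀ : 0 < p := hμ.trans hμp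
  have hp₁ : 0 < 1 - p := by linarith
  have hμ₁ : 0 < 1 - μ := by linarith
  have hmgf : 1 - μ + μ * exp (log (p * (1 - μ) / ((1 - p) * μ))) =
      exp (log ((1 - μ) / (1 - p))) := by
    rw [exp_log (by positivity), exp_log (by positivity)]
    field_simp
    ring
  rw [bernoulliChernoffBound, hmgf, ← exp_add, klBer,
    log_div (by positivity) (by positivity), log_mul hp₀.ne' hμ₁.ne', log_mul hp₁.ne' hμ.ne',
    log_div hμ₁.ne' hp₁.ne', log_div hp₀.ne' hμ.ne', log_div hp₁.ne' hμ₁.ne']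
  congr 1
  ring

lemma tendsto_bernoulliChernoffBound_one (μ : ℝ) :
    Tendsto (bernoulliChernoffBound μ 1) atTop (𝓝 μ) := by
  have h : Tendsto (fun t => (1 - μ) * exp (-t) + μ) atTop (𝓝 μ) := by
    simpa using (tendsto_exp_neg_atTop_nhds_zero.const_mul (1 - μ)).add_const μ
  refine h.congr fun t => ?_
  rw [bernoulliChernoffBound, mul_one, mul_add, mul_left_comm, ← exp_add, neg_add_cancel,
    exp_zero]
  ring

lemma le_exp_neg_mul_klBer_of_forall_le {μ p c : ℝ} (n : ℕ) (hμ : 0 ≤ μ) (hμp : μ ≤ p)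
    (hp : p ≤ 1) (hc : ∀ t, 0 ≤ t → c ≤ bernoulliChernoffBound μ p t ^ n) :
    c ≤ exp (-n * klBer p μ) := by
  rw [neg_mul_comm, exp_nat_mul]
  by_cases hkl : klBer p μ ≤ 0
  · calc c ≤ bernoulliChernoffBound μ p 0 ^ n := hc 0 le_rfl
      _ = 1 := by simp [bernoulliChernoffBound]
      _ ≤ exp (-klBer p μ) ^ n := one_le_pow₀ (one_le_exp (by linarith))
  have hμ₀ : 0 < μ := hμ.lt_of_ne fun h => hkl (h ▸ klBer_zero_right_nonpos (by linarith) hp)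
  have hμp' : μ < p := hμp.lt_of_ne fun h => hkl (h ▸ (klBer_self p).le)
  rcases hp.lt_or_eq with hp₁ | rfl
  · refine (hc _ (log_nonneg ?_)).trans_eq (by rw [bernoulliChernoffBound_log_eq hμ₀ hμp' hp₁])
    rw [le_div_iff₀ (by nlinarith)]
    nlinarith
  · rw [klBer_one_left, neg_neg, exp_log hμ₀]
    exact ge_of_tendsto ((tendsto_bernoulliChernoffBound_one μ).pow n)
      ((eventually_ge_atTop 0).mono hc)

section Bernoulli

variable {Ω : Type*} [MeasurableSpace Ω] {P : Measure Ω} {X : Ω → ℝ}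

lemma exp_mul_ae_eq_indicator (hval : ∀ᵐ ω ∂P, X ω = 0 ∨ X ω = 1) (t : ℝ) :
    (fun ω => exp (t * X ω)) =ᵐ[P]
      fun ω => {ω | X ω = 1}.indicator (fun _ => exp t - 1) ω + 1 := by
  filter_upwards [hval] with ω hω
  rcases hω with h | h <;> simp [h]

lemma integrable_exp_mul_of_ae_zero_or_one [IsFiniteMeasure P] (hX : Measurable X)
    (hval : ∀ᵐ ω ∂P, X ω = 0 ∨ X ω = 1) (t : ℝ) : Integrable (fun ω => exp (t * X ω)) P :=
  (((integrable_const _).indicator (hX (measurableSet_singleton 1))).add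
    (integrable_const 1)).congr (exp_mul_ae_eq_indicator hval t).symm

lemma mgf_of_ae_zero_or_one [IsProbabilityMeasure P] {μ : ℝ} (hX : Measurable X)
    (hval : ∀ᵐ ω ∂P, X ω = 0 ∨ X ω = 1) (hmean : P {ω | X ω = 1} = ENNReal.ofReal μ)
    (hμ : 0 ≤ μ) (t : ℝ) : mgf X P t = 1 - μ + μ * exp t := by
  have hA : MeasurableSet {ω | X ω = 1} := hX (measurableSet_singleton 1)
  rw [mgf, integral_congr_ae (exp_mul_ae_eq_indicator hval t),
    integral_add ((integrable_const _).indicator hA) (integrable_const 1),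
    integral_indicator_const _ hA, measureReal_def, hmean, ENNReal.toReal_ofReal hμ]
  simp only [smul_eq_mul, integral_const, probReal_univ, mul_one]
  ring

end Bernoulli

lemma measureReal_sum_ge_le_bernoulliChernoffBound {Ω ι : Type*} [MeasurableSpace Ω]
    [Fintype ι] {P : Measure Ω} [IsProbabilityMeasure P] {X : ι → Ω → ℝ} {μ p t : ℝ}
    (hmeas : ∀ i, Measurable (X i)) (hindep : iIndepFun X P)
    (hval : ∀ i, ∀ᵐ ω ∂P, X i ω = 0 ∨ X i ω = 1)
    (hmean : ∀ i, P {ω | X i ω = 1} = ENNReal.ofReal μ) (hμ : 0 ≤ μ) (ht : 0 ≤ t) :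
    P.real {ω | Fintype.card ι * p ≤ ∑ i, X i ω} ≤
      bernoulliChernoffBound μ p t ^ Fintype.card ι := by
  have hint : Integrable (fun ω => exp (t * (∑ i, X i) ω)) P :=
    hindep.integrable_exp_mul_sum hmeas fun i _ =>
      integrable_exp_mul_of_ae_zero_or_one (hmeas i) (hval i) t
  have hchernoff := measure_ge_le_exp_mul_mgf (Fintype.card ι * p) ht hint
  simp only [Finset.sum_apply] at hchernoff
  refine hchernoff.trans_eq ?_
  rw [hindep.mgf_sum hmeas, Finset.prod_congr rfl fun i _ =>
      mgf_of_ae_zero_or_one (hmeas i) (hval i) (hmean i) hμ t,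
    Finset.prod_const, Finset.card_univ, bernoulliChernoffBound, mul_pow, ← exp_nat_mul]
  congr 2
  ring

theorem chernoff_hoeffding_upper_general {Ω : Type*} [MeasurableSpace Ω] (P : Measure Ω)
    [IsProbabilityMeasure P] (n : ℕ) (X : Fin n → Ω → ℝ) (μ : ℝ)
    (hμ : μ ∈ Set.Icc (0:ℝ) 1) (hmeas : ∀ i, Measurable (X i))
    (hindep : iIndepFun X P)
    (hval : ∀ i, ∀ᵐ ω ∂P, X i ω = 0 ∨ X i ω = 1)
    (hmean : ∀ i, P {ω | X i ω = 1} = ENNReal.ofReal μ)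
    (ε : ℝ) (hε : ε ∈ Set.Icc (0:ℝ) (1 - μ)) :
    P {ω | μ + ε ≤ (∑ i, X i ω) / n} ≤ ENNReal.ofReal (Real.exp (-(n : ℝ) * klBer (μ + ε) μ)) := by
  have hsub : {ω | μ + ε ≤ (∑ i, X i ω) / n} ⊆ {ω | n * (μ + ε) ≤ ∑ i, X i ω} := by
    intro ω hω
    rcases n.eq_zero_or_pos with rfl | hn
    · simp
    · exact (le_div_iff₀' (by positivity : (0 : ℝ) < n)).1 hω
  rw [ENNReal.le_ofReal_iff_toReal_le (measure_ne_top _ _) (exp_pos _).le]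
  refine (measureReal_mono hsub).trans <|
    le_exp_neg_mul_klBer_of_forall_le n hμ.1 (by linarith [hε.1]) (by linarith [hε.2]) ?_
  intro t ht
  simpa only [Fintype.card_fin] using
    measureReal_sum_ge_le_bernoulliChernoffBound hmeas hindep hval hmean hμ.1 ht

/-- Chernoff–Hoeffding bound in KL form, upper tail. -/
theorem chernoff_hoeffding_upper {Ω : Type*} [MeasurableSpace Ω] (P : Measure Ω)
    [IsProbabilityMeasure P] (n : ℕ) (hn : 0 < n) (X : Fin n → Ω → ℝ) (μ : ℝ)
    (hμ : μ ∈ Set.Icc (0:ℝ) 1) (hmeas : ∀ i, Measurable (X i))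
    (hindep : iIndepFun X P)
    (hval : ∀ i, ∀ᵐ ω ∂P, X i ω = 0 ∨ X i ω = 1)
    (hmean : ∀ i, P {ω | X i ω = 1} = ENNReal.ofReal μ)
    (ε : ℝ) (hε : ε ∈ Set.Icc (0:ℝ) (1 - μ)) :
    P {ω | μ + ε ≤ (∑ i, X i ω) / n} ≤ ENNReal.ofReal (Real.exp (-(n : ℝ) * klBer (μ + ε) μ)) :=
  chernoff_hoeffding_upper_general P n X μ hμ hmeas hindep hval hmean ε hε
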